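/- Let f be bounded by B and define T̂_0 = (1/n²)Σ_{i,j} f(X_i,Y_j) with i.i.d. pairs (X_i,Y_i) ∼ P_{XY}. Then |E[T̂_0²] − T_0²| ≤ (6/n − 11/n² + 6/n³)·B², where T_0 = E_{P_X×P_Y} f(X,Y). -/

import Mathlib

/-!
Write `T̂₀ = n⁻² ∑ᵢⱼ gᵢⱼ` with `gᵢⱼ = f (Xᵢ, Yⱼ)`; then `E gᵢⱼ` is `T₀` for `i ≠ j` and
`S = E_{P_XY} f` for `i = j`, so `E T̂₀ = (S + (n - 1) T₀) / n`.

Upper bound: in `E T̂₀² = n⁻⁴ ∑ᵢⱼqᵣ E[gᵢⱼ g_qr]` the `n(n-1)(n-2)(n-3)` terms with pairwise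
distinct indices factor by independence into `T₀²`, all others are at most `B²`, and
`1 - n(n-1)(n-2)(n-3)/n⁴ = 6/n - 11/n² + 6/n³`.

Lower bound: bounding the remaining terms by `-B²` would lose a factor 2; instead
`E T̂₀² ≥ (E T̂₀)²`, and `T₀² - ((S + (n - 1) T₀) / n)²` is at most `(6/n - 11/n² + 6/n³) B²`
for `|S|, |T₀| ≤ B` (with equality at `n = 2`, `T₀ = B`, `S = -B`).
-/

open MeasureTheory ProbabilityTheory Finset
open scoped ENNReal

theorem Nat.cast_descFactorial_four {R : Type*} [CommRing R] (n : ℕ) :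
    (n.descFactorial 4 : R) = n * (n - 1) * (n - 2) * (n - 3) := by
  rw [← descPochhammer_eval_eq_descFactorial]
  simp [descPochhammer_succ_eval]

theorem card_injective_quadruples (α : Type*) [Fintype α] [DecidableEq α] :
    #{x : (α × α) × (α × α) | Function.Injective ![x.1.1, x.1.2, x.2.1, x.2.2]}
      = (Fintype.card α).descFactorial 4 := by
  rw [← Fintype.card_fin 4, ← Fintype.card_embedding_eq, ← Fintype.card_subtype]
  refine Fintype.card_congr
    { toFun := fun x => ⟨![x.1.1.1, x.1.1.2, x.1.2.1, x.1.2.2], x.2⟩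
      invFun := fun e => ⟨((e 0, e 1), (e 2, e 3)), ?_⟩
      left_inv := fun x => rfl
      right_inv := fun e => ?_ }
  · convert e.injective
    ext k; fin_cases k <;> rfl
  · ext k; fin_cases k <;> rfl

theorem sum_le_card_mul_add_card_compl_mul {κ : Type*} [Fintype κ] (D : Finset κ)
    {a : κ → ℝ} {c C : ℝ} (hD : ∀ k ∈ D, a k = c) (hC : ∀ k, a k ≤ C) :
    ∑ k, a k ≤ #D * c + (Fintype.card κ - #D) * C := by
  classical
  rw [← sum_add_sum_compl D a, sum_congr rfl hD, sum_const, nsmul_eq_mul]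
  gcongr
  calc ∑ k ∈ Dᶜ, a k ≤ #Dᶜ • C := sum_le_card_nsmul _ _ _ fun k _ => hC k
    _ = (Fintype.card κ - #D) * C := by
      rw [card_compl, nsmul_eq_mul, Nat.cast_sub (card_le_univ D)]

theorem sum_ite_eq_add_card_sub_one_mul {ι R : Type*} [Fintype ι] [DecidableEq ι] [CommRing R]
    (i : ι) (s t : R) :
    ∑ j, (if i = j then s else t) = s + (Fintype.card ι - 1) * t := by
  calc ∑ j, (if i = j then s else t) = ∑ j, ((if i = j then s - t else 0) + t) := by
        refine sum_congr rfl fun j _ => ?_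
        split_ifs <;> ring
    _ = s + (Fintype.card ι - 1) * t := by
        rw [sum_add_distrib, sum_ite_eq, if_pos (mem_univ i), sum_const, card_univ,
          nsmul_eq_mul]
        ring

theorem sq_sub_sq_vstatistic_mean_le {n : ℕ} (hn : 0 < n) {s t B : ℝ} (hs : |s| ≤ B)
    (ht : |t| ≤ B) :
    t ^ 2 - ((s + (n - 1) * t) / n) ^ 2
      ≤ (6 / (n : ℝ) - 11 / (n : ℝ) ^ 2 + 6 / (n : ℝ) ^ 3) * B ^ 2 := by
  obtain ⟨hs₁, hs₂⟩ := abs_le.1 hs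
  obtain ⟨ht₁, ht₂⟩ := abs_le.1 ht
  obtain rfl | hn₂ := (Nat.one_le_iff_ne_zero.2 hn.ne').eq_or_lt
  · norm_num
    nlinarith
  have h2n : (2 : ℝ) ≤ n := by exact_mod_cast hn₂
  -- `n² t² - (s + (n - 1) t)² = (t - s) ((2n - 1) t + s)`, maximal at `t = B`, `s = -B`.
  have key : (n : ℝ) ^ 2 * t ^ 2 - (s + (n - 1) * t) ^ 2 ≤ 4 * (n - 1) * B ^ 2 := by
    nlinarith [mul_nonneg (by linarith : (0 : ℝ) ≤ n - 2) (by nlinarith : 0 ≤ B ^ 2 - t ^ 2),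
      mul_nonneg (by linarith : (0 : ℝ) ≤ n - 1) (by nlinarith : 0 ≤ B ^ 2 + t * s),
      sq_nonneg (t + s)]
  have hpos : (0 : ℝ) < n := by linarith
  rw [div_pow, ← sub_nonneg]
  have : (6 / (n : ℝ) - 11 / (n : ℝ) ^ 2 + 6 / (n : ℝ) ^ 3) * B ^ 2
      - (t ^ 2 - (s + (n - 1) * t) ^ 2 / (n : ℝ) ^ 2)
      = ((6 * n ^ 2 - 11 * n + 6) * B ^ 2 - n * (n ^ 2 * t ^ 2 - (s + (n - 1) * t) ^ 2))
          / n ^ 3 := by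
    field_simp
  rw [this]
  apply div_nonneg _ (by positivity)
  -- `4 (n - 1) / n² ≤ 6/n - 11/n² + 6/n³` because `(2n - 3)(n - 2) ≥ 0`.
  nlinarith [mul_le_mul_of_nonneg_left key hpos.le,
    mul_nonneg (mul_nonneg (by linarith : (0 : ℝ) ≤ 2 * n - 3)
      (by linarith : (0 : ℝ) ≤ n - 2)) (sq_nonneg B)]

theorem descFactorial_four_mix_sub_sq_le {n : ℕ} (hn : 0 < n) (t B : ℝ) :
    (n.descFactorial 4 * t ^ 2 + (n ^ 4 - n.descFactorial 4) * B ^ 2) / n ^ 4 - t ^ 2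
      ≤ (6 / (n : ℝ) - 11 / (n : ℝ) ^ 2 + 6 / (n : ℝ) ^ 3) * B ^ 2 := by
  have hpos : (0 : ℝ) < n := by exact_mod_cast hn
  have hc : 0 ≤ 6 / (n : ℝ) - 11 / (n : ℝ) ^ 2 + 6 / (n : ℝ) ^ 3 := by
    have : 6 / (n : ℝ) - 11 / (n : ℝ) ^ 2 + 6 / (n : ℝ) ^ 3
        = (6 * n ^ 2 - 11 * n + 6) / n ^ 3 := by
      field_simp
    rw [this]
    exact div_nonneg (by nlinarith [sq_nonneg ((n : ℝ) - 1)]) (by positivity)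
  have : (n.descFactorial 4 * t ^ 2 + (n ^ 4 - n.descFactorial 4) * B ^ 2) / n ^ 4 - t ^ 2
      = (6 / (n : ℝ) - 11 / (n : ℝ) ^ 2 + 6 / (n : ℝ) ^ 3) * (B ^ 2 - t ^ 2) := by
    rw [Nat.cast_descFactorial_four]
    field_simp
    ring
  rw [this]
  exact mul_le_mul_of_nonneg_left (by nlinarith [sq_nonneg t]) hc

section

variable {Ω : Type*} [MeasurableSpace Ω] {μ : Measure Ω}

theorem integral_sq_sum {κ : Type*} [Fintype κ] {G : κ → Ω → ℝ}
    (hG : ∀ k l, Integrable (fun ω => G k ω * G l ω) μ) :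
    ∫ ω, (∑ k, G k ω) ^ 2 ∂μ = ∑ x : κ × κ, ∫ ω, G x.1 ω * G x.2 ω ∂μ := by
  simp_rw [sq, sum_mul_sum, ← Fintype.sum_prod_type']
  exact integral_finsetSum _ fun x _ => hG x.1 x.2

theorem ProbabilityTheory.IndepFun.integral_comp_prodMk [IsFiniteMeasure μ] {X Y : Type*}
    [MeasurableSpace X] [MeasurableSpace Y] {A : Ω → X} {B : Ω → Y} (h : IndepFun A B μ)
    (hA : Measurable A) (hB : Measurable B) {f : X × Y → ℝ} (hf : Measurable f) :
    ∫ ω, f (A ω, B ω) ∂μ = ∫ z, f z ∂((μ.map A).prod (μ.map B)) := by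
  rw [← (indepFun_iff_map_prod_eq_prod_map_map hA.aemeasurable hB.aemeasurable).1 h,
    integral_map (hA.prodMk hB).aemeasurable hf.aestronglyMeasurable]

theorem abs_integral_le_of_abs_le [IsProbabilityMeasure μ] {g : Ω → ℝ} {B : ℝ}
    (h : ∀ ω, |g ω| ≤ B) :
    |∫ ω, g ω ∂μ| ≤ B := by
  simpa using norm_integral_le_of_norm_le_const (μ := μ)
    (ae_of_all _ fun ω => (Real.norm_eq_abs (g ω)).trans_le (h ω))

theorem sq_integral_le_integral_sq [IsProbabilityMeasure μ] {Z : Ω → ℝ} (hZ : MemLp Z 2 μ) :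
    (∫ ω, Z ω ∂μ) ^ 2 ≤ ∫ ω, Z ω ^ 2 ∂μ := by
  have := variance_nonneg Z μ
  rw [variance_eq_sub hZ] at this
  simpa [sub_nonneg] using this

end

section VStatistic

variable {X Y Ω ι : Type*} [MeasurableSpace X] [MeasurableSpace Y] [MeasurableSpace Ω]
  {μ : Measure Ω} [IsProbabilityMeasure μ] {P : Measure (X × Y)} {V : ι → Ω → X × Y}
  {f : X × Y → ℝ}

theorem memLp_comp_fst_snd (hmeas : ∀ i, Measurable (V i)) (hf : Measurable f) {B : ℝ}
    (hB : ∀ z, |f z| ≤ B) (p : ℝ≥0∞) (i j : ι) :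
    MemLp (fun ω => f ((V i ω).1, (V j ω).2)) p μ :=
  MemLp.of_bound (hf.comp ((hmeas i).fst.prodMk (hmeas j).snd)).aestronglyMeasurable B
    (ae_of_all _ fun _ => hB _)

theorem integral_comp_fst_snd_eq_ite [DecidableEq ι] (hmeas : ∀ i, Measurable (V i))
    (hindep : iIndepFun V μ) (hid : ∀ i, μ.map (V i) = P) (hf : Measurable f) (i j : ι) :
    ∫ ω, f ((V i ω).1, (V j ω).2) ∂μ
      = if i = j then ∫ z, f z ∂P
        else ∫ z, f z ∂((P.map Prod.fst).prod (P.map Prod.snd)) := by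
  split_ifs with hij
  · subst hij
    rw [← hid i, integral_map (hmeas i).aemeasurable hf.aestronglyMeasurable]
  · have hind : IndepFun (fun ω => (V i ω).1) (fun ω => (V j ω).2) μ :=
      (hindep.indepFun hij).comp measurable_fst measurable_snd
    have hlaw : ∀ k, μ.map (fun ω => (V k ω).1) = P.map Prod.fst ∧
        μ.map (fun ω => (V k ω).2) = P.map Prod.snd := fun k => by
      rw [← hid k, Measure.map_map measurable_fst (hmeas k),
        Measure.map_map measurable_snd (hmeas k)]
      exact ⟨rfl, rfl⟩
    rw [hind.integral_comp_prodMk (measurable_fst.comp (hmeas i))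
      (measurable_snd.comp (hmeas j)) hf, (hlaw i).1, (hlaw j).2]

theorem integral_mul_comp_fst_snd_of_injective (hmeas : ∀ i, Measurable (V i))
    (hindep : iIndepFun V μ) (hid : ∀ i, μ.map (V i) = P) (hf : Measurable f) {i j q r : ι}
    (h : Function.Injective ![i, j, q, r]) :
    ∫ ω, f ((V i ω).1, (V j ω).2) * f ((V q ω).1, (V r ω).2) ∂μ
      = (∫ z, f z ∂((P.map Prod.fst).prod (P.map Prod.snd))) ^ 2 := by
  classical
  obtain ⟨hij, hiq, hir, hjq, hjr, hqr⟩ :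
      i ≠ j ∧ i ≠ q ∧ i ≠ r ∧ j ≠ q ∧ j ≠ r ∧ q ≠ r :=
    ⟨h.ne (by decide : (0 : Fin 4) ≠ 1), h.ne (by decide : (0 : Fin 4) ≠ 2),
      h.ne (by decide : (0 : Fin 4) ≠ 3), h.ne (by decide : (1 : Fin 4) ≠ 2),
      h.ne (by decide : (1 : Fin 4) ≠ 3), h.ne (by decide : (2 : Fin 4) ≠ 3)⟩
  have hφ : Measurable fun p : (X × Y) × (X × Y) => f (p.1.1, p.2.2) := by fun_prop
  have hind : IndepFun (fun ω => f ((V i ω).1, (V j ω).2))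
      (fun ω => f ((V q ω).1, (V r ω).2)) μ :=
    (hindep.indepFun_prodMk_prodMk hmeas i j q r hiq hir hjq hjr).comp hφ hφ
  rw [hind.integral_fun_mul_eq_mul_integral
      (hφ.comp ((hmeas i).prodMk (hmeas j))).aestronglyMeasurable
      (hφ.comp ((hmeas q).prodMk (hmeas r))).aestronglyMeasurable,
    integral_comp_fst_snd_eq_ite hmeas hindep hid hf,
    integral_comp_fst_snd_eq_ite hmeas hindep hid hf, if_neg hij, if_neg hqr, sq]

variable {n : ℕ} {V : Fin n → Ω → X × Y}

theorem integral_vstatistic (hmeas : ∀ i, Measurable (V i)) (hindep : iIndepFun V μ)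
    (hid : ∀ i, μ.map (V i) = P) (hf : Measurable f) {B : ℝ} (hB : ∀ z, |f z| ≤ B)
    (hn : 0 < n) :
    ∫ ω, (1 / (n : ℝ) ^ 2) * ∑ i, ∑ j, f ((V i ω).1, (V j ω).2) ∂μ
      = ((∫ z, f z ∂P) + (n - 1) * ∫ z, f z ∂((P.map Prod.fst).prod (P.map Prod.snd)))
          / n := by
  have hint : ∀ i j, Integrable (fun ω => f ((V i ω).1, (V j ω).2)) μ := fun i j =>
    memLp_one_iff_integrable.1 (memLp_comp_fst_snd hmeas hf hB 1 i j)
  rw [integral_const_mul,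
    integral_finsetSum _ fun i _ => integrable_finsetSum _ fun j _ => hint i j]
  simp_rw [integral_finsetSum _ fun j _ => hint _ j,
    integral_comp_fst_snd_eq_ite hmeas hindep hid hf, sum_ite_eq_add_card_sub_one_mul, sum_const,
    card_univ, Fintype.card_fin, nsmul_eq_mul]
  field_simp

theorem integral_vstatistic_sq_le (hmeas : ∀ i, Measurable (V i)) (hindep : iIndepFun V μ)
    (hid : ∀ i, μ.map (V i) = P) (hf : Measurable f) {B : ℝ} (hB : ∀ z, |f z| ≤ B) :
    ∫ ω, ((1 / (n : ℝ) ^ 2) * ∑ i, ∑ j, f ((V i ω).1, (V j ω).2)) ^ 2 ∂μ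
      ≤ (n.descFactorial 4 * (∫ z, f z ∂((P.map Prod.fst).prod (P.map Prod.snd))) ^ 2
          + (n ^ 4 - n.descFactorial 4) * B ^ 2) / n ^ 4 := by
  classical
  let G : Fin n × Fin n → Ω → ℝ := fun p ω => f ((V p.1 ω).1, (V p.2 ω).2)
  have hG : ∀ ω, ∑ i, ∑ j, f ((V i ω).1, (V j ω).2) = ∑ p, G p ω := fun ω =>
    (Fintype.sum_prod_type' _).symm
  have hprod :
      ∀ x : (Fin n × Fin n) × (Fin n × Fin n), ∫ ω, G x.1 ω * G x.2 ω ∂μ ≤ B ^ 2 :=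
    fun x => (le_abs_self _).trans <| abs_integral_le_of_abs_le fun ω => by
      have h₁ := hB ((V x.1.1 ω).1, (V x.1.2 ω).2)
      have h₂ := hB ((V x.2.1 ω).1, (V x.2.2 ω).2)
      rw [abs_mul, sq]
      exact mul_le_mul h₁ h₂ (abs_nonneg _) ((abs_nonneg _).trans h₁)
  have hbound := sum_le_card_mul_add_card_compl_mul
    {x : (Fin n × Fin n) × (Fin n × Fin n) | Function.Injective ![x.1.1, x.1.2, x.2.1, x.2.2]}
    (fun x hx => integral_mul_comp_fst_snd_of_injective hmeas hindep hid hf (by simpa using hx))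
    hprod
  have hcard : (Fintype.card ((Fin n × Fin n) × (Fin n × Fin n)) : ℝ) = n ^ 4 := by
    simp only [Fintype.card_prod, Fintype.card_fin]
    push_cast
    ring
  rw [card_injective_quadruples, hcard, Fintype.card_fin] at hbound
  simp_rw [hG, mul_pow]
  rw [integral_const_mul, integral_sq_sum fun k l =>
    (memLp_comp_fst_snd hmeas hf hB 1 k.1 k.2).integrable_mul
      (memLp_comp_fst_snd hmeas hf hB ⊤ l.1 l.2)]
  calc (1 / (n : ℝ) ^ 2) ^ 2
        * ∑ x : (Fin n × Fin n) × (Fin n × Fin n), ∫ ω, G x.1 ω * G x.2 ω ∂μ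
      ≤ (1 / (n : ℝ) ^ 2) ^ 2 * (n.descFactorial 4
          * (∫ z, f z ∂((P.map Prod.fst).prod (P.map Prod.snd))) ^ 2
          + (n ^ 4 - n.descFactorial 4) * B ^ 2) :=
        mul_le_mul_of_nonneg_left hbound (by positivity)
    _ = _ := by ring

end VStatistic

/-- Second-moment bias of the V-statistic `T̂_0 = (1/n²)Σ_{i,j} f(X_i,Y_j)`
for i.i.d. pairs `(X_i,Y_i) ∼ P_{XY}` and `f` bounded by `B`:
`|E[T̂_0²] − T_0²| ≤ (6/n − 11/n² + 6/n³) B²`, where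
`T_0 = E_{P_X×P_Y} f(X,Y)`. -/
theorem vstatistic_T0_sq_bias
    {X Y Ω : Type*} [MeasurableSpace X] [MeasurableSpace Y] [MeasurableSpace Ω]
    (μ : Measure Ω) [IsProbabilityMeasure μ]
    (PXY : Measure (X × Y)) [IsProbabilityMeasure PXY]
    (n : ℕ) (hn : 0 < n)
    (V : Fin n → Ω → X × Y)
    (hmeas : ∀ i, Measurable (V i))
    (hindep : iIndepFun V μ)
    (hid : ∀ i, Measure.map (V i) μ = PXY)
    (f : X × Y → ℝ) (hf : Measurable f)
    (B : ℝ) (hB : ∀ z, |f z| ≤ B) :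
    |(∫ ω, ((1 / (n : ℝ) ^ 2) * ∑ i, ∑ j, f ((V i ω).1, (V j ω).2)) ^ 2 ∂μ)
        - (∫ z, f z ∂((PXY.map Prod.fst).prod (PXY.map Prod.snd))) ^ 2|
      ≤ (6 / (n : ℝ) - 11 / (n : ℝ) ^ 2 + 6 / (n : ℝ) ^ 3) * B ^ 2 := by
  have := Measure.isProbabilityMeasure_map (μ := PXY) measurable_fst.aemeasurable
  have := Measure.isProbabilityMeasure_map (μ := PXY) measurable_snd.aemeasurable
  have hT : |∫ z, f z ∂((PXY.map Prod.fst).prod (PXY.map Prod.snd))| ≤ B :=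
    abs_integral_le_of_abs_le hB
  have hS : |∫ z, f z ∂PXY| ≤ B := abs_integral_le_of_abs_le hB
  have hlower : (∫ ω, (1 / (n : ℝ) ^ 2) * ∑ i, ∑ j, f ((V i ω).1, (V j ω).2) ∂μ) ^ 2
      ≤ ∫ ω, ((1 / (n : ℝ) ^ 2) * ∑ i, ∑ j, f ((V i ω).1, (V j ω).2)) ^ 2 ∂μ :=
    sq_integral_le_integral_sq ((memLp_finsetSum _ fun i _ => memLp_finsetSum _
      fun j _ => memLp_comp_fst_snd hmeas hf hB 2 i j).const_mul _)
  rw [integral_vstatistic hmeas hindep hid hf hB hn] at hlower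
  have hupper := integral_vstatistic_sq_le hmeas hindep hid hf hB
  rw [abs_le]
  constructor
  · linarith [sq_sub_sq_vstatistic_mean_le hn hS hT]
  · linarith [descFactorial_four_mix_sub_sq_le hn
      (∫ z, f z ∂((PXY.map Prod.fst).prod (PXY.map Prod.snd))) B]
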